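/- arXiv:2101.08038 — 7 statements merged into one kernel-verified Lean document; each statement's English description precedes it below -/
import Mathlib

section
/- Let q ≥ 3 be a prime power such that q - 1 admits an odd prime divisor ℓ. Then there exists an element a ∈ 𝔽_q such that for every integer m ≥ 0, both polynomials X^(ℓ^m) - a and X^(ℓ^m) - a + 1 are irreducible over 𝔽_q. In particular, (X^(ℓ^m) - a, X^(ℓ^m) - a + 1) is a twin prime pair for each m ≥ 0. -/
/-!
By Capelli's criterion (`X_pow_sub_C_irreducible_of_odd`), for odd prime `ℓ` the binomial
`X ^ ℓ ^ m - c` is irreducible as soon as `c` is not an `ℓ`-th power, so it suffices to find `a`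
such that neither `a` nor `a - 1` is an `ℓ`-th power. Since `F^×` is cyclic and `ℓ ∣ q - 1`, there
are exactly `(q - 1) / ℓ` nonzero `ℓ`-th powers; together with `0` and the shifts by one they
cover at most `1 + 2 (q - 1) / ℓ < q` elements when `ℓ ≥ 3`.
-/

open Polynomial Finset

theorem irreducible_X_pow_prime_pow_sub_C {K : Type*} [Field K] {ℓ : ℕ} (hℓ : ℓ.Prime)
    (hℓodd : Odd ℓ) {a : K} (ha : ∀ b : K, b ^ ℓ ≠ a) (m : ℕ) :
    Irreducible (X ^ ℓ ^ m - C a) :=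
  X_pow_sub_C_irreducible_of_odd hℓodd.pow fun _ hp hpm =>
    (Nat.prime_dvd_prime_iff_eq hp hℓ).mp (hp.dvd_of_dvd_pow hpm) ▸ ha

namespace FiniteField

variable {F : Type*} [Field F] [Fintype F]

theorem card_image_units_pow_mul [DecidableEq F] {n : ℕ} (hn : n ∣ Fintype.card F - 1) :
    #(univ.image fun x : Fˣ => (x : F) ^ n) * n = Fintype.card F - 1 := by
  have hrange := IsCyclic.card_powMonoidHom_range (G := Fˣ) n
  rw [Nat.card_eq_fintype_card (α := Fˣ), Fintype.card_units, Nat.gcd_eq_right hn] at hrange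
  have himage : #(univ.image fun x : Fˣ => (x : F) ^ n)
      = Nat.card (powMonoidHom n : Fˣ →* Fˣ).range := by
    rw [← Set.ncard_coe_finset, coe_image, coe_univ, Set.image_univ, ← Nat.card_coe_set_eq,
      show (fun x : Fˣ => (x : F) ^ n) = Units.val ∘ powMonoidHom n by ext; simp,
      Set.range_comp, Nat.card_image_of_injective Units.val_injective]
    rfl
  rw [himage, hrange, Nat.div_mul_cancel hn]

theorem exists_forall_pow_ne_and_pow_ne_sub_one {n : ℕ} (hn : 3 ≤ n)
    (hdvd : n ∣ Fintype.card F - 1) :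
    ∃ a : F, (∀ b : F, b ^ n ≠ a) ∧ ∀ b : F, b ^ n ≠ a - 1 := by
  classical
  set S := univ.image fun x : Fˣ => (x : F) ^ n
  have pow_mem : ∀ b : F, b ≠ 0 → b ^ n ∈ S := fun b hb =>
    mem_image.mpr ⟨Units.mk0 b hb, mem_univ _, rfl⟩
  have one_mem : (1 : F) ∈ S := by simpa using pow_mem 1 one_ne_zero
  have hS : #S * n = Fintype.card F - 1 := card_image_units_pow_mul hdvd
  have hcard : #(insert 0 (S ∪ S.image (· + 1))) < #(univ : Finset F) := by
    have h_insert := card_insert_le 0 (S ∪ S.image (· + 1))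
    have h_union := card_union_le S (S.image (· + 1))
    have h_shift := card_image_le (s := S) (f := (· + 1))
    have h_three : 3 * #S ≤ #S * n := by rw [mul_comm]; gcongr
    have h_pos : 0 < #S := card_pos.mpr ⟨1, one_mem⟩
    have := Fintype.one_lt_card (α := F)
    rw [card_univ]
    omega
  obtain ⟨a, -, ha⟩ := exists_mem_notMem_of_card_lt_card hcard
  simp only [mem_insert, mem_union, mem_image, not_or, not_exists, not_and] at ha
  obtain ⟨ha0, haS, haS1⟩ := ha
  refine ⟨a, fun b hb => ?_, fun b hb => ?_⟩
  · rcases eq_or_ne b 0 with rfl | hb0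
    · exact ha0 (by rw [← hb, zero_pow (by omega)])
    · exact haS (hb ▸ pow_mem b hb0)
  · rcases eq_or_ne b 0 with rfl | hb0
    · rw [zero_pow (by omega), eq_comm, sub_eq_zero] at hb
      exact haS (hb ▸ one_mem)
    · exact haS1 _ (pow_mem b hb0) (by rw [hb, sub_add_cancel])

end FiniteField

open FiniteField in
theorem twin_primes_of_odd_prime_divisor_general
    (q : ℕ)
    (F : Type*) [Field F] [Fintype F] (hcard : Fintype.card F = q)
    (ℓ : ℕ) (hℓ : ℓ.Prime) (hℓodd : Odd ℓ) (hdvd : ℓ ∣ q - 1) :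
    ∃ a : F, ∀ m : ℕ,
      ((X ^ ℓ ^ m - C a : F[X]).Monic ∧ Irreducible (X ^ ℓ ^ m - C a : F[X])) ∧
      ((X ^ ℓ ^ m - C a + 1 : F[X]).Monic ∧
        Irreducible (X ^ ℓ ^ m - C a + 1 : F[X])) := by
  have hℓ3 : 3 ≤ ℓ := by
    have := hℓ.two_le
    obtain ⟨k, rfl⟩ := hℓodd
    omega
  obtain ⟨a, ha, ha'⟩ := exists_forall_pow_ne_and_pow_ne_sub_one hℓ3 (hcard ▸ hdvd)
  have hpow : ∀ m, ℓ ^ m ≠ 0 := fun m => pow_ne_zero m hℓ.ne_zero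
  have hshift : ∀ m, (X ^ ℓ ^ m - C a + 1 : F[X]) = X ^ ℓ ^ m - C (a - 1) := fun m => by
    rw [C_sub, C_1]; ring
  refine ⟨a, fun m => ⟨⟨monic_X_pow_sub_C a (hpow m), ?_⟩, ?_⟩⟩
  · exact irreducible_X_pow_prime_pow_sub_C hℓ hℓodd ha m
  · rw [hshift]
    exact ⟨monic_X_pow_sub_C _ (hpow m), irreducible_X_pow_prime_pow_sub_C hℓ hℓodd ha' m⟩

/-- Hall's construction: if `q - 1` has an odd prime divisor `ℓ`, then there is `a ∈ 𝔽_q`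
such that for every `m ≥ 0` both `X^(ℓ^m) - a` and `X^(ℓ^m) - a + 1` are (monic) irreducible,
i.e., they form a twin prime pair. -/
theorem twin_primes_of_odd_prime_divisor
    (q : ℕ) (hq : 3 ≤ q) (hq' : IsPrimePow q)
    (F : Type*) [Field F] [Fintype F] (hcard : Fintype.card F = q)
    (ℓ : ℕ) (hℓ : ℓ.Prime) (hℓodd : Odd ℓ) (hdvd : ℓ ∣ q - 1) :
    ∃ a : F, ∀ m : ℕ,
      ((X ^ ℓ ^ m - C a : F[X]).Monic ∧ Irreducible (X ^ ℓ ^ m - C a : F[X])) ∧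
      ((X ^ ℓ ^ m - C a + 1 : F[X]).Monic ∧
        Irreducible (X ^ ℓ ^ m - C a + 1 : F[X])) :=
  twin_primes_of_odd_prime_divisor_general q F hcard ℓ hℓ hℓodd hdvd
end

section
/- Let q ≥ 3 be a prime power such that q - 1 admits an odd prime divisor. Then the set of monic irreducible polynomials f ∈ 𝔽_q[X] such that f + 1 is also irreducible is infinite. -/
open Polynomial

/-!
Since `Fˣ` is cyclic and `ℓ ∣ q - 1`, at most `(q - 1) / ℓ + 1` elements of `𝔽_q` are `ℓ`-th
powers; as `1 = 1 ^ ℓ = 0 ^ ℓ + 1` is counted twice, the sets `{b ^ ℓ}` and `{b ^ ℓ + 1}` cover at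
most `2 (q - 1) / ℓ + 1 < q` elements when `ℓ ≥ 3`. So some `a` has neither `a` nor `a - 1` an
`ℓ`-th power, and by Capelli's criterion every `X ^ ℓ ^ k - a` and
`X ^ ℓ ^ k - a + 1 = X ^ ℓ ^ k - (a - 1)` is irreducible.
-/

section PowerCount

variable {F : Type*} [Field F] [Fintype F]

theorem ncard_range_pow_le {n : ℕ} (hn : n ∣ Fintype.card F - 1) :
    (Set.range fun x : F => x ^ n).ncard ≤ (Fintype.card F - 1) / n + 1 := by
  set R := (powMonoidHom n : Fˣ →* Fˣ).range
  have hsub : (Set.range fun x : F => x ^ n) ⊆ insert 0 (Units.val '' (R : Set Fˣ)) := by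
    rintro _ ⟨x, rfl⟩
    rcases eq_or_ne x 0 with rfl | hx
    · rcases eq_or_ne n 0 with rfl | hn0
      · exact Or.inr ⟨1, ⟨1, by simp⟩, by simp⟩
      · exact Or.inl (zero_pow hn0)
    · exact Or.inr ⟨Units.mk0 x hx ^ n, ⟨Units.mk0 x hx, rfl⟩, by simp⟩
  have hR : Nat.card R = (Fintype.card F - 1) / n := by
    rw [IsCyclic.card_powMonoidHom_range, Nat.card_units, Nat.card_eq_fintype_card,
      Nat.gcd_eq_right hn]
  calc (Set.range fun x : F => x ^ n).ncard
      ≤ (insert 0 (Units.val '' (R : Set Fˣ))).ncard := Set.ncard_le_ncard hsub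
    _ ≤ (Units.val '' (R : Set Fˣ)).ncard + 1 := Set.ncard_insert_le _ _
    _ = (Fintype.card F - 1) / n + 1 := by
        rw [Set.ncard_image_of_injective _ Units.val_injective, ← Nat.card_coe_set_eq]
        exact congrArg (· + 1) hR

theorem exists_forall_pow_ne_and_pow_ne_sub_one {n : ℕ} (hn : 2 < n)
    (hdvd : n ∣ Fintype.card F - 1) :
    ∃ a : F, (∀ b : F, b ^ n ≠ a) ∧ ∀ b : F, b ^ n ≠ a - 1 := by
  have hS := ncard_range_pow_le hdvd
  set S := Set.range fun x : F => x ^ n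
  have hone : (1 : F) ∈ S ∩ (· + 1) '' S :=
    ⟨⟨1, one_pow n⟩, 0, ⟨0, zero_pow (by omega)⟩, zero_add 1⟩
  have hunion : (S ∪ (· + 1) '' S).ncard < Fintype.card F := by
    have hinter := Set.ncard_union_add_ncard_inter S ((· + 1) '' S)
    have hshift : ((· + 1) '' S).ncard ≤ S.ncard := Set.ncard_image_le
    have hpos : 0 < (S ∩ (· + 1) '' S).ncard := (Set.ncard_pos).mpr ⟨1, hone⟩
    obtain ⟨m, hm⟩ := hdvd
    have hq : 1 < Fintype.card F := Fintype.one_lt_card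
    have hm0 : 0 < m := Nat.pos_of_ne_zero (by rintro rfl; omega)
    rw [hm, Nat.mul_div_cancel_left _ (by omega)] at hS
    have hcard : Fintype.card F = n * m + 1 := by omega
    nlinarith
  obtain ⟨a, ha⟩ : ∃ a, a ∉ S ∪ (· + 1) '' S := by
    by_contra! h
    rw [Set.eq_univ_of_forall h, Set.ncard_univ, Nat.card_eq_fintype_card] at hunion
    exact hunion.false
  exact ⟨a, fun b hb => ha (Or.inl ⟨b, hb⟩),
    fun b hb => ha (Or.inr ⟨a - 1, ⟨b, hb⟩, sub_add_cancel a 1⟩)⟩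

end PowerCount

theorem infinitely_many_twin_primes_general
    (q : ℕ)
    (F : Type*) [Field F] [Fintype F] (hcard : Fintype.card F = q)
    (ℓ : ℕ) (hℓ : ℓ.Prime) (hℓodd : Odd ℓ) (hdvd : ℓ ∣ q - 1) :
    {f : F[X] | f.Monic ∧ Irreducible f ∧ Irreducible (f + 1)}.Infinite := by
  subst hcard
  have hℓ2 : ℓ ≠ 2 := by
    rintro rfl
    exact Nat.not_odd_iff_even.mpr even_two hℓodd
  obtain ⟨a, ha, ha'⟩ :=
    exists_forall_pow_ne_and_pow_ne_sub_one (hℓ.two_le.lt_of_ne' hℓ2) hdvd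
  refine Set.infinite_of_injective_forall_mem (f := fun k : ℕ => (X : F[X]) ^ ℓ ^ k - C a)
    (fun i j hij => Nat.pow_right_injective hℓ.two_le ?_) fun k => ?_
  · simpa only [natDegree_X_pow_sub_C] using congrArg natDegree hij
  have hshift : (X : F[X]) ^ ℓ ^ k - C a + 1 = X ^ ℓ ^ k - C (a - 1) := by
    rw [C_sub, C_1]
    ring
  refine ⟨monic_X_pow_sub_C a (pow_ne_zero _ hℓ.ne_zero),
    X_pow_sub_C_irreducible_of_prime_pow hℓ hℓ2 k ha, ?_⟩
  rw [hshift]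
  exact X_pow_sub_C_irreducible_of_prime_pow hℓ hℓ2 k ha'

/-- If `q - 1` admits an odd prime divisor, then the set of monic irreducible polynomials
`f` over `𝔽_q` such that `f + 1` is also irreducible is infinite. -/
theorem infinitely_many_twin_primes
    (q : ℕ) (hq : 3 ≤ q) (hq' : IsPrimePow q)
    (F : Type*) [Field F] [Fintype F] (hcard : Fintype.card F = q)
    (ℓ : ℕ) (hℓ : ℓ.Prime) (hℓodd : Odd ℓ) (hdvd : ℓ ∣ q - 1) :
    {f : F[X] | f.Monic ∧ Irreducible f ∧ Irreducible (f + 1)}.Infinite :=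
  infinitely_many_twin_primes_general q F hcard ℓ hℓ hℓodd hdvd
end

section
/- Let q ≥ 3 be a prime power and let ℓ be an odd prime dividing q - 1. Then there exists a ∈ 𝔽_q with a ≠ 0 and a - 1 ≠ 0 such that neither a nor a - 1 is an ℓth power of an element of 𝔽_q (equivalently, a ∉ (𝔽_q^×)^ℓ and a - 1 ∉ (𝔽_q^×)^ℓ). -/
/-!
Let `A` be the set of `ℓ`-th powers in `𝔽_q`, including `0` and `1`. As `𝔽_q^×` is cyclic and
`ℓ ∣ q - 1`, `#A = (q - 1)/ℓ + 1`. If every non-power `a` had `a - 1 ∈ A`, then `a ↦ a - 1` would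
inject the `q - #A` non-powers into `A \ {0}` (since `a ≠ 1`), forcing `q + 1 ≤ 2 #A`, which fails
for `ℓ ≥ 3`.
-/

open Finset

theorem Finset.exists_notMem_and_sub_notMem {G : Type*} [AddGroup G] [Fintype G] [DecidableEq G]
    {A : Finset G} {c : G} (h0 : 0 ∈ A) (hc : c ∈ A) (hA : 2 * #A ≤ Fintype.card G) :
    ∃ a, a ∉ A ∧ a - c ∉ A := by
  by_contra! h
  have hmaps : Set.MapsTo (· - c) (Aᶜ : Finset G) (A.erase 0) := fun a ha => by
    have ha : a ∉ A := mem_compl.1 ha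
    exact mem_erase.2 ⟨sub_ne_zero.2 fun hac => ha (hac ▸ hc), h a ha⟩
  have hle := card_le_card_of_injOn _ hmaps (sub_left_injective.injOn)
  rw [card_compl, card_erase_of_mem h0] at hle
  have := card_pos.2 ⟨0, h0⟩
  omega

theorem FiniteField.card_image_pow {F : Type*} [Field F] [Fintype F] [DecidableEq F] {n : ℕ}
    (hn : n ≠ 0) :
    #(univ.image fun b : F => b ^ n) = Nat.card (powMonoidHom n : Fˣ →* Fˣ).range + 1 := by
  have hsplit : univ.image (fun b : F => b ^ n) =
      insert 0 ((univ.image (powMonoidHom n : Fˣ →* Fˣ)).map ⟨Units.val, Units.val_injective⟩) := by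
    ext a
    simp only [mem_image, mem_univ, true_and, mem_insert, mem_map, powMonoidHom_apply,
      Function.Embedding.coeFn_mk, exists_exists_eq_and, Units.val_pow_eq_pow_val]
    constructor
    · rintro ⟨b, rfl⟩
      rcases eq_or_ne b 0 with rfl | hb
      · exact .inl (zero_pow hn)
      · exact .inr ⟨Units.mk0 b hb, rfl⟩
    · rintro (rfl | ⟨u, rfl⟩)
      · exact ⟨0, zero_pow hn⟩
      · exact ⟨u, rfl⟩
  rw [hsplit, card_insert_of_notMem (by simp), card_map, ← Set.toFinset_range, Set.toFinset_card,
    ← Nat.card_eq_fintype_card, ← MonoidHom.coe_range]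
  rfl

theorem FiniteField.card_image_pow_of_dvd {F : Type*} [Field F] [Fintype F] [DecidableEq F] {n : ℕ}
    (hn : n ≠ 0) (hdvd : n ∣ Fintype.card F - 1) :
    #(univ.image fun b : F => b ^ n) = (Fintype.card F - 1) / n + 1 := by
  rw [card_image_pow hn, IsCyclic.card_powMonoidHom_range, Nat.card_units, Nat.card_eq_fintype_card,
    Nat.gcd_eq_right hdvd]

theorem exists_consecutive_nonpowers_general
    (q : ℕ)
    (F : Type*) [Field F] [Fintype F] (hcard : Fintype.card F = q)
    (ℓ : ℕ) (hℓ : ℓ.Prime) (hℓodd : Odd ℓ) (hdvd : ℓ ∣ q - 1) :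
    ∃ a : F, a ≠ 0 ∧ a - 1 ≠ 0 ∧
      (¬ ∃ b : F, b ^ ℓ = a) ∧ (¬ ∃ b : F, b ^ ℓ = a - 1) := by
  classical
  subst hcard
  have hℓ3 : 3 ≤ ℓ := by have := hℓ.two_le; have := Nat.odd_iff.1 hℓodd; omega
  set A := univ.image fun b : F => b ^ ℓ
  have h0 : (0 : F) ∈ A := mem_image.2 ⟨0, mem_univ _, zero_pow hℓ.ne_zero⟩
  have h1 : (1 : F) ∈ A := mem_image.2 ⟨1, mem_univ _, one_pow ℓ⟩
  have hA : 2 * #A ≤ Fintype.card F := by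
    obtain ⟨m, hm⟩ := hdvd
    rw [FiniteField.card_image_pow_of_dvd hℓ.ne_zero ⟨m, hm⟩, hm, Nat.mul_div_cancel_left m hℓ.pos]
    have := Fintype.one_lt_card (α := F)
    have hm0 : m ≠ 0 := by rintro rfl; omega
    have hcard : Fintype.card F = ℓ * m + 1 := by omega
    nlinarith
  obtain ⟨a, ha, ha1⟩ := Finset.exists_notMem_and_sub_notMem h0 h1 hA
  exact ⟨a, fun h => ha (h ▸ h0), fun h => ha1 (h ▸ h0), by simpa [A] using ha,
    by simpa [A] using ha1⟩

/-- Pigeonhole step: if `ℓ` is an odd prime dividing `q - 1`, then there are two consecutive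
nonzero elements `a, a - 1` of `𝔽_q`, neither of which is an `ℓ`-th power. -/
theorem exists_consecutive_nonpowers
    (q : ℕ) (hq : 3 ≤ q) (hq' : IsPrimePow q)
    (F : Type*) [Field F] [Fintype F] (hcard : Fintype.card F = q)
    (ℓ : ℕ) (hℓ : ℓ.Prime) (hℓodd : Odd ℓ) (hdvd : ℓ ∣ q - 1) :
    ∃ a : F, a ≠ 0 ∧ a - 1 ≠ 0 ∧
      (¬ ∃ b : F, b ^ ℓ = a) ∧ (¬ ∃ b : F, b ^ ℓ = a - 1) :=
  exists_consecutive_nonpowers_general q F hcard ℓ hℓ hℓodd hdvd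
end

section
/- (Lemma A) Let p be an odd prime, let ℓ be a prime not dividing p - 1, and fix an integer m ≥ 0. If the polynomial X^(pℓ^m) - X^(ℓ^m) - 1 is irreducible over 𝔽_p, then for every a ∈ 𝔽_p^× the polynomial X^(pℓ^m) - X^(ℓ^m) + a is irreducible over 𝔽_p. -/
/-!
Substituting `X ↦ c X` with `c ∈ K^×` turns `X^(qn) - X^n + a` into `c^n (X^(qn) - X^n + a c^(-n))`,
because `c^q = c` in a field with `q` elements. When `n` is prime to `q - 1`, every element of
`K^×` is an `n`-th power, so the constant term can be moved to any nonzero value without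
affecting irreducibility.
-/

open Polynomial

theorem Polynomial.irreducible_X_pow_sub_X_pow_add_C_pow_mul_iff {R : Type*} [CommRing R]
    {q n : ℕ} (c : Rˣ) (hc : (c : R) ^ (q * n) = (c : R) ^ n) (b : R) :
    Irreducible (X ^ (q * n) - X ^ n + C ((c : R) ^ n * b) : R[X]) ↔
      Irreducible (X ^ (q * n) - X ^ n + C b : R[X]) := by
  let := c.invertible
  have hsubst : algEquivCMulXAddC (c : R) 0 (X ^ (q * n) - X ^ n + C ((c : R) ^ n * b)) =
      C ((c : R) ^ n) * (X ^ (q * n) - X ^ n + C b) := by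
    simp only [algEquivCMulXAddC_apply, map_zero, add_zero, map_add, map_sub, map_pow, aeval_X,
      aeval_C, algebraMap_eq]
    rw [mul_pow, mul_pow, ← C_pow, ← C_pow, hc, C_mul]
    ring
  rw [← MulEquiv.irreducible_iff (algEquivCMulXAddC (c : R) 0), hsubst,
    irreducible_isUnit_mul ((c.isUnit.pow n).map C)]

theorem Units.exists_pow_eq_of_coprime_card {G₀ : Type*} [GroupWithZero G₀] {n : ℕ}
    (hn : (Nat.card G₀ - 1).Coprime n) (a : G₀ˣ) : ∃ c : G₀ˣ, c ^ n = a := by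
  rw [← Nat.card_units] at hn
  exact (powCoprime hn).surjective a

theorem FiniteField.irreducible_X_pow_sub_X_pow_add_C_iff {K : Type*} [Field K] [Fintype K]
    {n : ℕ} (hn : (Fintype.card K - 1).Coprime n) (a b : Kˣ) :
    Irreducible (X ^ (Fintype.card K * n) - X ^ n + C (a : K) : K[X]) ↔
      Irreducible (X ^ (Fintype.card K * n) - X ^ n + C (b : K) : K[X]) := by
  rw [← Nat.card_eq_fintype_card] at hn
  obtain ⟨c, hc⟩ := Units.exists_pow_eq_of_coprime_card hn (a * b⁻¹)
  have hab : (a : K) = (c : K) ^ n * b := by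
    rw [← Units.val_pow_eq_pow_val, hc]
    simp
  rw [hab]
  exact irreducible_X_pow_sub_X_pow_add_C_pow_mul_iff c (by rw [pow_mul, pow_card]) b

theorem lemmaA_general
    (p : ℕ) [Fact p.Prime]
    (ℓ : ℕ) (hℓ : ℓ.Prime) (hnd : ¬ ℓ ∣ p - 1) (m : ℕ)
    (h : Irreducible (X ^ (p * ℓ ^ m) - X ^ ℓ ^ m - 1 : (ZMod p)[X])) :
    ∀ a : (ZMod p)ˣ,
      Irreducible (X ^ (p * ℓ ^ m) - X ^ ℓ ^ m + C (a : ZMod p) : (ZMod p)[X]) := by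
  intro a
  have hcop : (Fintype.card (ZMod p) - 1).Coprime (ℓ ^ m) := by
    rw [ZMod.card]
    exact (hℓ.coprime_iff_not_dvd.mpr hnd).symm.pow_right m
  have hiff := FiniteField.irreducible_X_pow_sub_X_pow_add_C_iff hcop (-1) a
  rw [ZMod.card] at hiff
  rw [← hiff]
  simpa [sub_eq_add_neg] using h

/-- Lemma A: if `ℓ` is a prime not dividing `p - 1` and `X^(pℓ^m) - X^(ℓ^m) - 1` is
irreducible over `𝔽_p`, then `X^(pℓ^m) - X^(ℓ^m) + a` is irreducible over `𝔽_p` for every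
`a ∈ 𝔽_p^×`. -/
theorem lemmaA
    (p : ℕ) [Fact p.Prime] (hpodd : Odd p)
    (ℓ : ℕ) (hℓ : ℓ.Prime) (hnd : ¬ ℓ ∣ p - 1) (m : ℕ)
    (h : Irreducible (X ^ (p * ℓ ^ m) - X ^ ℓ ^ m - 1 : (ZMod p)[X])) :
    ∀ a : (ZMod p)ˣ,
      Irreducible (X ^ (p * ℓ ^ m) - X ^ ℓ ^ m + C (a : ZMod p) : (ZMod p)[X]) :=
  lemmaA_general p ℓ hℓ hnd m h
end

section
/- (Lemma B, first part) Let p be an odd prime, let e be the multiplicative order of any root of f(X) = X^p - X - 1 in an algebraic closure of 𝔽_p, and let ℓ be an odd prime dividing e. Fix an integer m ≥ 0 and let β be any root of f(X^(ℓ^m)) = X^(pℓ^m) - X^(ℓ^m) - 1 in an algebraic closure of 𝔽_p. Then the multiplicative order of β equals e·ℓ^m. -/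
/-!
Both `α` and `γ = β ^ ℓ ^ m` satisfy `x ^ p = x + 1`, so `γ - α` is fixed by Frobenius and hence
equals some `k : 𝔽_p`. Then `γ = α + k = α ^ p ^ k` is the image of `α` under an injective ring
endomorphism, so `orderOf γ = e`. Finally, `ℓ ∣ orderOf (x ^ ℓ)` forces
`orderOf x = orderOf (x ^ ℓ) * ℓ`, and since `orderOf (x ^ ℓ) ∣ orderOf x` this iterates along
`β, β ^ ℓ, …, β ^ ℓ ^ m = γ`.
-/
theorem orderOf_eq_orderOf_pow_mul_of_dvd {G : Type*} [Monoid G] {x : G} {k : ℕ}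
    (h : k ∣ orderOf (x ^ k)) : orderOf x = orderOf (x ^ k) * k := by
  have hk : k ≠ 0 := by
    rintro rfl
    simp at h
  have hdvd : k ∣ orderOf x := h.trans (orderOf_pow_dvd k)
  rw [orderOf_pow_of_dvd hk hdvd, Nat.div_mul_cancel hdvd]

theorem orderOf_eq_orderOf_pow_pow_mul_of_dvd {G : Type*} [Monoid G] {x : G} {k : ℕ} (m : ℕ)
    (h : k ∣ orderOf (x ^ k ^ m)) : orderOf x = orderOf (x ^ k ^ m) * k ^ m := by
  induction m with
  | zero => simp
  | succ m ih =>
    have hstep : orderOf (x ^ k ^ m) = orderOf (x ^ k ^ (m + 1)) * k := by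
      rw [pow_succ, pow_mul] at h ⊢
      exact orderOf_eq_orderOf_pow_mul_of_dvd h
    rw [ih (hstep ▸ h.mul_right k), hstep, pow_succ]
    ring

section CharP

variable {K : Type*} (p : ℕ) [Fact p.Prime]

theorem pow_char_pow_eq_add_natCast [CommRing K] [CharP K p] {a : K} (ha : a ^ p = a + 1)
    (k : ℕ) : a ^ p ^ k = a + k := by
  induction k with
  | zero => simp
  | succ k ih =>
    rw [pow_succ, pow_mul, ih, add_pow_char, ha, ← frobenius_def, map_natCast]
    push_cast
    ring

variable [Field K] [CharP K p]

theorem exists_natCast_eq_of_pow_char_eq_self {x : K} (hx : x ^ p = x) : ∃ k : ℕ, (k : K) = x := by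
  have hbot : x ∈ (ZMod.castHom dvd_rfl K).fieldRange := by
    rw [ZMod.fieldRange_castHom_eq_bot p]
    exact (Subfield.mem_bot_iff_pow_eq_self K p).mpr hx
  obtain ⟨c, rfl⟩ := hbot
  obtain ⟨k, rfl⟩ := ZMod.natCast_zmod_surjective c
  exact ⟨k, (map_natCast _ k).symm⟩

theorem orderOf_eq_of_pow_char_eq_add_one {a b : K} (ha : a ^ p = a + 1) (hb : b ^ p = b + 1) :
    orderOf b = orderOf a := by
  have hfixed : (b - a) ^ p = b - a := by
    rw [sub_pow_char, ha, hb]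
    ring
  obtain ⟨k, hk⟩ := exists_natCast_eq_of_pow_char_eq_self p hfixed
  have hb' : b = a ^ p ^ k := by
    rw [pow_char_pow_eq_add_natCast p ha, hk]
    ring
  rw [hb', ← iterateFrobenius_def]
  exact orderOf_injective (iterateFrobenius K p k).toMonoidHom (iterateFrobenius K p k).injective a

end CharP

theorem lemmaB_order_general
    (p : ℕ) [Fact p.Prime]
    (α : AlgebraicClosure (ZMod p)) (hα : α ^ p - α - 1 = 0)
    (e : ℕ) (he : e = orderOf α)
    (ℓ : ℕ) (hdvd : ℓ ∣ e)
    (m : ℕ) (β : AlgebraicClosure (ZMod p))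
    (hβ : β ^ (p * ℓ ^ m) - β ^ ℓ ^ m - 1 = 0) :
    orderOf β = e * ℓ ^ m := by
  have hα' : α ^ p = α + 1 := by linear_combination hα
  have hγ : (β ^ ℓ ^ m) ^ p = β ^ ℓ ^ m + 1 := by
    rw [← pow_mul']
    linear_combination hβ
  have horder : orderOf (β ^ ℓ ^ m) = e := he ▸ orderOf_eq_of_pow_char_eq_add_one p hα' hγ
  rw [orderOf_eq_orderOf_pow_pow_mul_of_dvd m (horder ▸ hdvd), horder]

/-- Lemma B, first part: if `e` is the multiplicative order of a root of `X^p - X - 1`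
over `𝔽_p`, `ℓ` is an odd prime dividing `e`, and `β` is a root of
`X^(pℓ^m) - X^(ℓ^m) - 1` in an algebraic closure of `𝔽_p`, then `orderOf β = e * ℓ^m`. -/
theorem lemmaB_order
    (p : ℕ) [Fact p.Prime] (hpodd : Odd p)
    (α : AlgebraicClosure (ZMod p)) (hα : α ^ p - α - 1 = 0)
    (e : ℕ) (he : e = orderOf α)
    (ℓ : ℕ) (hℓ : ℓ.Prime) (hℓodd : Odd ℓ) (hdvd : ℓ ∣ e)
    (m : ℕ) (β : AlgebraicClosure (ZMod p))
    (hβ : β ^ (p * ℓ ^ m) - β ^ ℓ ^ m - 1 = 0) :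
    orderOf β = e * ℓ ^ m :=
  lemmaB_order_general p α hα e he ℓ hdvd m β hβ
end

section
/- Let p be an odd prime, let e be the multiplicative order of any root of f(X) = X^p - X - 1 in an algebraic closure of 𝔽_p, set Q = (p^p - 1)/(p - 1), and let ℓ be an odd prime dividing e. Then for every integer m ≥ 0, p^(p·ℓ^m) ≡ 1 + (p-1)·Q·ℓ^m (mod e·ℓ^(m+1)). -/
/-!
Since `α ^ p = α + 1`, the Frobenius gives `α ^ p ^ k = α + k`, so `α ^ p ^ p = α` and
`e ∣ p ^ p - 1`. Put `x = p ^ p`. If `x ≡ 1 + s [ZMOD N * ℓ]` with `ℓ ∣ N ∣ s`, then expanding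
`x ^ ℓ = (1 + t) ^ ℓ` to second order in `t` (which is divisible by `N`) gives
`x ^ ℓ ≡ 1 + ℓ * s [ZMOD N * ℓ ^ 2]`: the quadratic term vanishes because `ℓ ∣ C(ℓ, 2)` for odd `ℓ`,
and the cubic remainder because `ℓ ^ 2 ∣ N ^ 2`. Starting from `N = e` and `s = x - 1`,
iterate `m` times.
-/

theorem pow_three_dvd_one_add_pow_sub {R : Type*} [CommRing R] (t : R) (n : ℕ) :
    t ^ 3 ∣ (1 + t) ^ n - (1 + n * t + n.choose 2 * t ^ 2) := by
  induction n with
  | zero => simp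
  | succ n ih =>
    obtain ⟨q, hq⟩ := ih
    refine ⟨q * (1 + t) + n.choose 2, ?_⟩
    rw [Nat.choose_succ_succ, Nat.choose_one_right, pow_succ]
    push_cast
    linear_combination (1 + t) * hq

theorem pow_char_pow_eq_add_natCast_s8 {R : Type*} [CommRing R] {p : ℕ} [ExpChar R p] {α : R}
    (hα : α ^ p = α + 1) (k : ℕ) : α ^ p ^ k = α + k := by
  induction k with
  | zero => simp
  | succ k ih =>
    rw [pow_succ, pow_mul, ih, ← frobenius_def, map_add, map_natCast, frobenius_def, hα]
    push_cast
    ring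

theorem orderOf_dvd_char_pow_char_sub_one {K : Type*} [Field K] {p : ℕ} [CharP K p] [Fact p.Prime]
    {α : K} (hα : α ^ p = α + 1) : orderOf α ∣ p ^ p - 1 := by
  have hp : p.Prime := Fact.out
  have hα0 : α ≠ 0 := by
    rintro rfl
    simp [zero_pow hp.ne_zero] at hα
  have hfix : α ^ p ^ p = α := by
    simp [pow_char_pow_eq_add_natCast_s8 hα]
  apply orderOf_dvd_of_pow_eq_one
  rw [pow_sub₀ α hα0 (Nat.one_le_pow _ _ hp.pos), hfix, pow_one, mul_inv_cancel₀ hα0]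

theorem pow_prime_modEq_of_modEq {ℓ : ℕ} (hℓ : ℓ.Prime) (hℓodd : Odd ℓ) {N s x : ℤ}
    (hℓN : (ℓ : ℤ) ∣ N) (hNs : N ∣ s) (hx : x ≡ 1 + s [ZMOD N * ℓ]) :
    x ^ ℓ ≡ 1 + s * ℓ [ZMOD N * ℓ ^ 2] := by
  obtain ⟨u, rfl⟩ := hℓN
  obtain ⟨d, rfl⟩ := hNs
  obtain ⟨k, hk⟩ := Int.modEq_iff_dvd.mp hx
  obtain ⟨v, hv⟩ : ℓ ∣ ℓ.choose 2 :=
    hℓ.dvd_choose_self two_ne_zero (lt_of_le_of_ne hℓ.two_le (hℓodd.ne_two_of_dvd_nat dvd_rfl).symm)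
  have hxt : x = 1 + ℓ * u * (d - ℓ * k) := by linear_combination -hk
  obtain ⟨q, hq⟩ := pow_three_dvd_one_add_pow_sub (ℓ * u * (d - ℓ * k)) ℓ
  rw [hv] at hq
  push_cast at hq
  refine Int.modEq_iff_dvd.mpr ⟨k - v * u * (d - ℓ * k) ^ 2 - u ^ 2 * (d - ℓ * k) ^ 3 * q, ?_⟩
  rw [hxt]
  linear_combination -hq

theorem pow_prime_pow_modEq {ℓ : ℕ} (hℓ : ℓ.Prime) (hℓodd : Odd ℓ) {E x : ℤ}
    (hℓE : (ℓ : ℤ) ∣ E) (hEx : E ∣ x - 1) (n : ℕ) :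
    x ^ ℓ ^ n ≡ 1 + (x - 1) * ℓ ^ n [ZMOD E * ℓ ^ (n + 1)] := by
  induction n with
  | zero => simp [Int.ModEq]
  | succ n ih =>
    rw [pow_succ, ← mul_assoc] at ih
    have := pow_prime_modEq_of_modEq hℓ hℓodd (dvd_mul_of_dvd_left hℓE _)
      (mul_dvd_mul_right hEx _) ih
    rw [pow_succ ℓ n, pow_mul]
    convert this using 1 <;> ring

theorem key_congruence_general
    (p : ℕ) [Fact p.Prime]
    (α : AlgebraicClosure (ZMod p)) (hα : α ^ p - α - 1 = 0)
    (e : ℕ) (he : e = orderOf α)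
    (ℓ : ℕ) (hℓ : ℓ.Prime) (hℓodd : Odd ℓ) (hdvd : ℓ ∣ e) (m : ℕ) :
    p ^ (p * ℓ ^ m) ≡
      1 + (p - 1) * ((p ^ p - 1) / (p - 1)) * ℓ ^ m [MOD e * ℓ ^ (m + 1)] := by
  have hp : p.Prime := Fact.out
  have he_dvd : e ∣ p ^ p - 1 := he ▸ orderOf_dvd_char_pow_char_sub_one (by linear_combination hα)
  have hQ : (p - 1) * ((p ^ p - 1) / (p - 1)) = p ^ p - 1 :=
    Nat.mul_div_cancel' (by simpa using Nat.sub_dvd_pow_sub_pow p 1 p)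
  have hcast : ((p ^ p - 1 : ℕ) : ℤ) = (p : ℤ) ^ p - 1 := by
    push_cast [Nat.cast_sub (Nat.one_le_pow _ _ hp.pos)]
    rfl
  have key := pow_prime_pow_modEq hℓ hℓodd (x := (p : ℤ) ^ p) (Int.natCast_dvd_natCast.mpr hdvd)
    (hcast ▸ Int.natCast_dvd_natCast.mpr he_dvd) m
  rw [hQ, pow_mul, ← Int.natCast_modEq_iff]
  push_cast [hcast]
  exact key

/-- Key congruence: with `e` the multiplicative order of a root of `X^p - X - 1` over `𝔽_p`,
`Q = (p^p - 1)/(p - 1)`, and `ℓ` an odd prime dividing `e`, one has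
`p^(p·ℓ^m) ≡ 1 + (p-1)·Q·ℓ^m (mod e·ℓ^(m+1))` for every `m ≥ 0`. -/
theorem key_congruence
    (p : ℕ) [Fact p.Prime] (hpodd : Odd p)
    (α : AlgebraicClosure (ZMod p)) (hα : α ^ p - α - 1 = 0)
    (e : ℕ) (he : e = orderOf α)
    (ℓ : ℕ) (hℓ : ℓ.Prime) (hℓodd : Odd ℓ) (hdvd : ℓ ∣ e) (m : ℕ) :
    p ^ (p * ℓ ^ m) ≡
      1 + (p - 1) * ((p ^ p - 1) / (p - 1)) * ℓ ^ m [MOD e * ℓ ^ (m + 1)] :=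
  key_congruence_general p α hα e he ℓ hℓ hℓodd hdvd m
end

section
/- (Theorem, part 1) Let p be an odd prime, let e be the multiplicative order of any root of f(X) = X^p - X - 1 in an algebraic closure of 𝔽_p, and let ℓ be an odd prime dividing e such that ℓ does not divide (p^p - 1)/e. Then for every integer m ≥ 0 and every a ∈ 𝔽_p^×, the polynomial f_a(X^(ℓ^m)) = X^(pℓ^m) - X^(ℓ^m) + a is irreducible over 𝔽_p. In particular, for each m ≥ 0 the tuple (f_1(X^(ℓ^m)), f_2(X^(ℓ^m)), …, f_{p-1}(X^(ℓ^m))) consists of p - 1 monic irreducible polynomials of common odd degree p·ℓ^m, any two of which differ by a nonzero constant. -/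
/-!
Write `q = p ^ p`. A root `α` of `X^p - X - 1` satisfies `α^(p^j) = α + j`, so `α ^ (q - 1) = 1`
and `α ^ (1 + p + ⋯ + p^(p-1)) = ∏ⱼ (α + j) = α^p - α = 1`. The second relation shows `ℓ ∤ p - 1`,
since otherwise `1 + p + ⋯ + p^(p-1) ≡ p ≢ 0 (mod ℓ)`. Hence `β = -a α`, a root of
`X^p - X + a`, has order divisible by the `ℓ`-part `ℓ^ν` of `e`, which by the hypothesis on `ℓ`
is the full `ℓ`-part of `q - 1`; every `ℓ^m`-th root `γ` of `β` then has order divisible by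
`ℓ^(ν+m)`. If `d` is the degree of `γ` over `𝔽_p`, then `γ^(p^d) = γ`; applied to `β = γ^(ℓ^m)`
this gives `p ∣ d`, and lifting the exponent in `ℓ^(ν+m) ∣ q^(d/p) - 1` gives `ℓ^m ∣ d/p`.
So `d ≥ p ℓ^m`, and the polynomial `X^(pℓ^m) - X^(ℓ^m) + a`, of degree `p ℓ^m`, is the minimal
polynomial of `γ`.
-/

open Polynomial

section XPowSubXPowAddC

variable {R : Type*} [Ring R] {N k : ℕ}

theorem X_pow_sub_X_pow_add_C_eq_X_pow_add (a : R) :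
    (X ^ N - X ^ k + C a : R[X]) = X ^ N + (C a - X ^ k) := by
  abel

theorem degree_C_sub_X_pow_lt (hk : k < N) (a : R) : (C a - X ^ k : R[X]).degree < N :=
  (degree_sub_le _ _).trans_lt <| max_lt
    (degree_C_le.trans_lt (WithBot.coe_lt_coe.mpr (k.zero_le.trans_lt hk)))
    ((degree_X_pow_le k).trans_lt (WithBot.coe_lt_coe.mpr hk))

theorem monic_X_pow_sub_X_pow_add_C (hk : k < N) (a : R) : (X ^ N - X ^ k + C a).Monic := by
  rw [X_pow_sub_X_pow_add_C_eq_X_pow_add]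
  exact monic_X_pow_add (degree_C_sub_X_pow_lt hk a)

theorem natDegree_X_pow_sub_X_pow_add_C [Nontrivial R] (hk : k < N) (a : R) :
    (X ^ N - X ^ k + C a).natDegree = N := by
  rw [X_pow_sub_X_pow_add_C_eq_X_pow_add, natDegree_add_eq_left_of_degree_lt, natDegree_X_pow]
  rw [degree_X_pow]
  exact degree_C_sub_X_pow_lt hk a

end XPowSubXPowAddC

theorem FiniteField.prod_X_sub_C_eq_X_pow_card_sub_X (K : Type*) [Field K] [Fintype K] :
    ∏ c : K, (X - C c) = X ^ Fintype.card K - X := by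
  have hmonic : (X ^ Fintype.card K - X : K[X]).Monic := by
    rw [sub_eq_add_neg]
    refine monic_X_pow_add ?_
    rw [degree_neg, degree_X]
    exact_mod_cast Fintype.one_lt_card
  have hcard : (X ^ Fintype.card K - X : K[X]).roots.card =
      (X ^ Fintype.card K - X : K[X]).natDegree := by
    rw [roots_X_pow_card_sub_X, X_pow_card_sub_X_natDegree_eq _ Fintype.one_lt_card]
    rfl
  have := prod_multiset_X_sub_C_of_monic_of_roots_card_eq hmonic hcard
  rwa [roots_X_pow_card_sub_X] at this

theorem prod_sub_algebraMap_eq_pow_card_sub {K A : Type*} [Field K] [Fintype K] [CommRing A]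
    [Algebra K A] (x : A) : ∏ c : K, (x - algebraMap K A c) = x ^ Fintype.card K - x := by
  simpa using congrArg (aeval x) (FiniteField.prod_X_sub_C_eq_X_pow_card_sub_X K)

theorem not_dvd_sub_one_of_dvd_geom_sum {ℓ q n : ℕ} (hq : 0 < q) (hn : ¬ ℓ ∣ n)
    (h : ℓ ∣ ∑ j ∈ Finset.range n, q ^ j) : ¬ ℓ ∣ q - 1 := by
  intro hq1
  have hq1' : (q : ZMod ℓ) = 1 := by
    rw [← sub_eq_zero, ← Nat.cast_one, ← Nat.cast_sub hq, ZMod.natCast_eq_zero_iff]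
    exact hq1
  apply hn
  rw [← ZMod.natCast_eq_zero_iff] at h ⊢
  simpa [hq1'] using h

theorem orderOf_dvd_orderOf_mul_mul_of_pow_eq_one {G : Type*} [CommMonoid G] {u : G} {r : ℕ}
    (hu : u ^ r = 1) (x : G) : orderOf x ∣ orderOf (u * x) * r := by
  refine orderOf_dvd_of_pow_eq_one ?_
  calc x ^ (orderOf (u * x) * r) = (u ^ r) ^ orderOf (u * x) * x ^ (orderOf (u * x) * r) := by
        rw [hu, one_pow, one_mul]
    _ = ((u * x) ^ orderOf (u * x)) ^ r := by rw [← pow_mul, ← pow_mul, mul_pow, mul_comm r]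
    _ = 1 := by rw [pow_orderOf_eq_one, one_pow]

theorem pow_add_dvd_orderOf_of_pow_dvd_orderOf_pow {G : Type*} [Monoid G] {g : G} {ℓ ν : ℕ}
    (hℓ : ℓ.Prime) (hν : ν ≠ 0) (m : ℕ) (h : ℓ ^ ν ∣ orderOf (g ^ ℓ ^ m)) :
    ℓ ^ (ν + m) ∣ orderOf g := by
  rw [orderOf_pow' g (pow_ne_zero m hℓ.ne_zero)] at h
  obtain ⟨j, hjm, hj⟩ := (Nat.dvd_prime_pow hℓ).mp (Nat.gcd_dvd_right (orderOf g) (ℓ ^ m))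
  have hsplit : orderOf g = orderOf g / ℓ ^ j * ℓ ^ j := by
    rw [← hj, Nat.div_mul_cancel (Nat.gcd_dvd_left _ _)]
  rw [hj] at h
  obtain rfl | hjm := hjm.eq_or_lt
  · rw [hsplit, pow_add]
    exact mul_dvd_mul h dvd_rfl
  · -- otherwise `ℓ ^ (j + 1)` would divide `gcd (orderOf g) (ℓ ^ m) = ℓ ^ j`
    have hdvd : ℓ ^ (j + 1) ∣ orderOf g := by
      rw [hsplit, pow_succ']
      exact mul_dvd_mul ((dvd_pow_self ℓ hν).trans h) dvd_rfl
    have := hj ▸ Nat.dvd_gcd hdvd (pow_dvd_pow ℓ hjm)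
    exact absurd (Nat.le_of_dvd (pow_pos hℓ.pos j) this)
      (Nat.not_le.mpr (Nat.pow_lt_pow_right hℓ.one_lt j.lt_succ_self))

theorem pow_dvd_of_pow_padicValNat_add_dvd_pow_sub_one {ℓ q k m : ℕ} [Fact ℓ.Prime] (hℓ : Odd ℓ)
    (hq : 1 < q) (hℓq : ℓ ∣ q - 1) (hk : k ≠ 0)
    (h : ℓ ^ (padicValNat ℓ (q - 1) + m) ∣ q ^ k - 1) : ℓ ^ m ∣ k := by
  have hℓq' : ¬ ℓ ∣ q := fun hdvd => (Fact.out : ℓ.Prime).one_lt.ne'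
    (Nat.dvd_one.mp (by simpa [Nat.sub_sub_self hq.le] using Nat.dvd_sub hdvd hℓq))
  have hlte := padicValNat.pow_sub_pow hℓ hq (by simpa using hℓq) hℓq' hk
  rw [one_pow] at hlte
  have hne : q ^ k - 1 ≠ 0 := Nat.sub_ne_zero_of_lt (Nat.one_lt_pow hk hq)
  rw [padicValNat_dvd_iff_le hne, hlte] at h
  exact (pow_dvd_pow ℓ (by omega)).trans pow_padicValNat_dvd

theorem pow_card_pow_natDegree_minpoly {F L : Type*} [Field F] [Finite F] [Field L] [Algebra F L]
    {x : L} (hx : IsIntegral F x) : x ^ Nat.card F ^ (minpoly F x).natDegree = x := by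
  have := (minpoly.irreducible hx).natDegree_dvd_iff_dvd_X_pow_card_pow_sub_X.mp dvd_rfl
  simpa [minpoly.dvd_iff, sub_eq_zero] using this

theorem orderOf_dvd_sub_one_of_pow_eq_self {M : Type*} [MonoidWithZero M]
    [IsRightCancelMulZero M] {x : M} (hx : x ≠ 0) {n : ℕ} (hn : 0 < n) (h : x ^ n = x) :
    orderOf x ∣ n - 1 := by
  refine orderOf_dvd_of_pow_eq_one (mul_right_cancel₀ hx ?_)
  rwa [← pow_succ, Nat.sub_add_cancel hn, one_mul]

section ArtinSchreier

variable {R : Type*} [CommRing R] {p : ℕ} [Fact p.Prime] [CharP R p]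

theorem pow_prime_pow_eq_add_mul_of_pow_prime_eq_add {x c : R} (hc : c ^ p = c)
    (hx : x ^ p = x + c) (n : ℕ) : x ^ p ^ n = x + n * c := by
  induction n with
  | zero => simp
  | succ n ih =>
    have hn : (n : R) ^ p = n := by rw [← frobenius_def, map_natCast]
    rw [pow_succ, pow_mul, ih, add_pow_char, hx, mul_pow, hn, hc]
    push_cast
    ring

theorem pow_prime_pow_prime_eq_self_of_pow_prime_eq_add {x c : R} (hc : c ^ p = c)
    (hx : x ^ p = x + c) : x ^ p ^ p = x := by
  simp [pow_prime_pow_eq_add_mul_of_pow_prime_eq_add hc hx p]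

theorem prime_dvd_of_pow_prime_pow_eq_self [NoZeroDivisors R] {x c : R} (hc : c ^ p = c)
    (hc0 : c ≠ 0) (hx : x ^ p = x + c) {d : ℕ} (hd : x ^ p ^ d = x) : p ∣ d := by
  rw [pow_prime_pow_eq_add_mul_of_pow_prime_eq_add hc hx d, add_eq_left] at hd
  exact (CharP.cast_eq_zero_iff R p d).mp ((mul_eq_zero.mp hd).resolve_right hc0)

variable [Algebra (ZMod p) R]

theorem orderOf_dvd_geom_sum_of_pow_prime_eq_add_one {x : R} (hx : x ^ p = x + 1) :
    orderOf x ∣ ∑ j ∈ Finset.range p, p ^ j := by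
  refine orderOf_dvd_of_pow_eq_one ?_
  have hrange : ∏ j ∈ Finset.range p, (x + j) = ∏ c : ZMod p, (x + algebraMap (ZMod p) R c) := by
    refine Finset.prod_nbij' (fun j => (j : ZMod p)) ZMod.val (by simp) (by simp [ZMod.val_lt])
      (fun j hj => ZMod.val_natCast_of_lt (Finset.mem_range.mp hj)) (by simp) (by simp)
  have hneg : ∏ c : ZMod p, (x + algebraMap (ZMod p) R c) =
      ∏ c : ZMod p, (x - algebraMap (ZMod p) R c) :=
    Fintype.prod_equiv (Equiv.neg (ZMod p)) _ _ (by simp [sub_eq_add_neg])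
  calc x ^ ∑ j ∈ Finset.range p, p ^ j = ∏ j ∈ Finset.range p, x ^ p ^ j :=
        (Finset.prod_pow_eq_pow_sum _ _ _).symm
    _ = ∏ j ∈ Finset.range p, (x + j) := by
      simp [pow_prime_pow_eq_add_mul_of_pow_prime_eq_add (one_pow p) hx]
    _ = x ^ p - x := by rw [hrange, hneg, prod_sub_algebraMap_eq_pow_card_sub, ZMod.card]
    _ = 1 := by rw [hx]; ring

theorem pow_padicValNat_orderOf_dvd_orderOf_algebraMap_mul {α : R} (hα : α ^ p = α + 1) {ℓ : ℕ}
    (hℓ : ℓ.Prime) (hdvd : ℓ ∣ orderOf α) {c : ZMod p} (hc : c ≠ 0) :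
    ℓ ^ padicValNat ℓ (orderOf α) ∣ orderOf (algebraMap (ZMod p) R c * α) := by
  have hp : p.Prime := Fact.out
  have hsum : ℓ ∣ ∑ j ∈ Finset.range p, p ^ j :=
    hdvd.trans (orderOf_dvd_geom_sum_of_pow_prime_eq_add_one hα)
  have hℓp : ¬ ℓ ∣ p := by
    intro hℓp
    have hdvd_erase : p ∣ ∑ j ∈ (Finset.range p).erase 0, p ^ j :=
      Finset.dvd_sum fun j hj => dvd_pow_self p (Finset.ne_of_mem_erase hj)
    rw [(Nat.prime_dvd_prime_iff_eq hℓ hp).mp hℓp,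
      ← Finset.add_sum_erase _ _ (Finset.mem_range.mpr hp.pos), pow_zero,
      Nat.dvd_add_left hdvd_erase] at hsum
    exact hp.one_lt.ne' (Nat.dvd_one.mp hsum)
  have hcop : (ℓ ^ padicValNat ℓ (orderOf α)).Coprime (p - 1) :=
    .pow_left _ ((Nat.Prime.coprime_iff_not_dvd hℓ).mpr
      (not_dvd_sub_one_of_dvd_geom_sum hp.pos hℓp hsum))
  have hu : algebraMap (ZMod p) R c ^ (p - 1) = 1 := by
    rw [← map_pow, ZMod.pow_card_sub_one_eq_one hc, map_one]
  exact hcop.dvd_of_dvd_mul_right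
    (pow_padicValNat_dvd.trans (orderOf_dvd_orderOf_mul_mul_of_pow_eq_one hu α))

end ArtinSchreier

section FiniteFieldExtension

variable {K : Type*} [Field K] {p : ℕ} [Fact p.Prime] [Algebra (ZMod p) K] [CharP K p]

theorem mul_pow_le_natDegree_minpoly {γ : K} (hγ : IsIntegral (ZMod p) γ) {ℓ m : ℕ}
    [Fact ℓ.Prime] (hℓ : Odd ℓ) (hℓp : ℓ ∣ p ^ p - 1) {c : ZMod p} (hc : c ≠ 0)
    (hβ : (γ ^ ℓ ^ m) ^ p = γ ^ ℓ ^ m + algebraMap (ZMod p) K c)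
    (hord : ℓ ^ padicValNat ℓ (p ^ p - 1) ∣ orderOf (γ ^ ℓ ^ m)) :
    p * ℓ ^ m ≤ (minpoly (ZMod p) γ).natDegree := by
  have hp : p.Prime := Fact.out
  set d := (minpoly (ZMod p) γ).natDegree
  have hγd : γ ^ p ^ d = γ := by simpa using pow_card_pow_natDegree_minpoly hγ
  obtain ⟨k, hk⟩ : p ∣ d := by
    refine prime_dvd_of_pow_prime_pow_eq_self (by rw [← map_pow, ZMod.pow_card])
      (by simpa using hc) hβ ?_
    rw [← pow_mul, mul_comm, pow_mul, hγd]
  have hk0 : k ≠ 0 := by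
    rintro rfl
    exact (minpoly.natDegree_pos hγ).ne' hk
  have hγ0 : γ ≠ 0 := by
    rintro rfl
    have hℓm : ℓ ^ m ≠ 0 := pow_ne_zero m (Fact.out : ℓ.Prime).ne_zero
    exact hc (by simpa [zero_pow hℓm, hp.ne_zero] using hβ.symm)
  have hpp : 1 < p ^ p := Nat.one_lt_pow hp.ne_zero hp.one_lt
  have hν : padicValNat ℓ (p ^ p - 1) ≠ 0 :=
    Nat.pos_iff_ne_zero.mp (one_le_padicValNat_of_dvd (by omega) hℓp)
  have hdvd : ℓ ^ (padicValNat ℓ (p ^ p - 1) + m) ∣ (p ^ p) ^ k - 1 :=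
    (pow_add_dvd_orderOf_of_pow_dvd_orderOf_pow Fact.out hν m hord).trans
      (orderOf_dvd_sub_one_of_pow_eq_self hγ0 (Nat.one_le_pow _ _ hpp.le)
        (by rwa [← pow_mul, ← hk]))
  calc p * ℓ ^ m ≤ p * k :=
        Nat.mul_le_mul_left p (Nat.le_of_dvd (Nat.pos_of_ne_zero hk0)
          (pow_dvd_of_pow_padicValNat_add_dvd_pow_sub_one hℓ hpp hℓp hk0 hdvd))
    _ = d := hk.symm

theorem irreducible_X_pow_mul_sub_X_pow_add_C [IsAlgClosed K] {α : K} (hα : α ^ p = α + 1)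
    {ℓ : ℕ} (hℓ : ℓ.Prime) (hℓodd : Odd ℓ) (hdvd : ℓ ∣ orderOf α)
    (hnd : ¬ ℓ ∣ (p ^ p - 1) / orderOf α) (m : ℕ) {a : ZMod p} (ha : a ≠ 0) :
    Irreducible (X ^ (p * ℓ ^ m) - X ^ ℓ ^ m + C a) := by
  have : Fact ℓ.Prime := ⟨hℓ⟩
  have hp : p.Prime := Fact.out
  have hα0 : α ≠ 0 := by
    rintro rfl
    simp [hp.ne_zero] at hα
  have hord : orderOf α ∣ p ^ p - 1 :=
    orderOf_dvd_sub_one_of_pow_eq_self hα0 (pow_pos hp.pos p)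
      (pow_prime_pow_prime_eq_self_of_pow_prime_eq_add (one_pow p) hα)
  have hν : padicValNat ℓ (orderOf α) = padicValNat ℓ (p ^ p - 1) := by
    have hpp : p ^ p - 1 ≠ 0 := Nat.sub_ne_zero_of_lt (Nat.one_lt_pow hp.ne_zero hp.one_lt)
    rw [← Nat.mul_div_cancel' hord, padicValNat.mul (ne_zero_of_dvd_ne_zero hpp hord)
      (fun h => hnd (by rw [h]; exact dvd_zero ℓ)), padicValNat.eq_zero_of_not_dvd hnd, add_zero]
  set β := algebraMap (ZMod p) K (-a) * α
  have hβ : β ^ p = β + algebraMap (ZMod p) K (-a) := by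
    rw [mul_pow, ← map_pow, ZMod.pow_card, hα]
    ring
  obtain ⟨γ, hγ⟩ := IsAlgClosed.exists_pow_nat_eq β (pow_pos hℓ.pos m)
  have hlt : ℓ ^ m < p * ℓ ^ m := (Nat.lt_mul_iff_one_lt_left (pow_pos hℓ.pos m)).mpr hp.one_lt
  have hmonic := monic_X_pow_sub_X_pow_add_C hlt a
  have hroot : aeval γ (X ^ (p * ℓ ^ m) - X ^ ℓ ^ m + C a) = 0 := by
    simp only [map_add, map_sub, map_pow, aeval_X, aeval_C, pow_mul', hγ, hβ, map_neg]
    ring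
  have hint : IsIntegral (ZMod p) γ := ⟨_, hmonic, by rwa [← aeval_def]⟩
  have hdeg := mul_pow_le_natDegree_minpoly hint hℓodd (hdvd.trans hord) (neg_ne_zero.mpr ha)
    (by rwa [hγ]) (by
      rw [hγ, ← hν]
      exact pow_padicValNat_orderOf_dvd_orderOf_algebraMap_mul hα hℓ hdvd (neg_ne_zero.mpr ha))
  rw [eq_of_monic_of_dvd_of_natDegree_le (minpoly.monic hint) hmonic (minpoly.dvd _ _ hroot)
    (by rwa [natDegree_X_pow_sub_X_pow_add_C hlt])]
  exact minpoly.irreducible hint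

end FiniteFieldExtension

/-- Theorem, part 1: with `e` the multiplicative order of a root of `X^p - X - 1` over `𝔽_p`
and `ℓ` an odd prime dividing `e` but not `(p^p - 1)/e`, the polynomial
`X^(pℓ^m) - X^(ℓ^m) + a` is irreducible over `𝔽_p` for every `m ≥ 0` and `a ∈ 𝔽_p^×`.
These polynomials are monic of common odd degree `p·ℓ^m` and any two of them differ by a
nonzero constant. -/
theorem twin_prime_tuples_odd_degree
    (p : ℕ) [Fact p.Prime] (hpodd : Odd p)
    (α : AlgebraicClosure (ZMod p)) (hα : α ^ p - α - 1 = 0)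
    (e : ℕ) (he : e = orderOf α)
    (ℓ : ℕ) (hℓ : ℓ.Prime) (hℓodd : Odd ℓ) (hdvd : ℓ ∣ e)
    (hnd : ¬ ℓ ∣ (p ^ p - 1) / e) (m : ℕ) (a : (ZMod p)ˣ) :
    Irreducible (X ^ (p * ℓ ^ m) - X ^ ℓ ^ m + C (a : ZMod p) : (ZMod p)[X]) ∧
    (X ^ (p * ℓ ^ m) - X ^ ℓ ^ m + C (a : ZMod p) : (ZMod p)[X]).Monic ∧
    (X ^ (p * ℓ ^ m) - X ^ ℓ ^ m + C (a : ZMod p) : (ZMod p)[X]).natDegree = p * ℓ ^ m ∧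
    Odd (p * ℓ ^ m) ∧
    ∀ b : (ZMod p)ˣ, a ≠ b →
      (X ^ (p * ℓ ^ m) - X ^ ℓ ^ m + C (a : ZMod p) : (ZMod p)[X]) -
          (X ^ (p * ℓ ^ m) - X ^ ℓ ^ m + C (b : ZMod p)) = C ((a : ZMod p) - b) ∧
        (a : ZMod p) - (b : ZMod p) ≠ 0 := by
  subst he
  have hαp : α ^ p = α + 1 := by linear_combination hα
  have hlt : ℓ ^ m < p * ℓ ^ m :=
    (Nat.lt_mul_iff_one_lt_left (pow_pos hℓ.pos m)).mpr (Fact.out : p.Prime).one_lt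
  refine ⟨irreducible_X_pow_mul_sub_X_pow_add_C hαp hℓ hℓodd hdvd hnd m a.ne_zero,
    monic_X_pow_sub_X_pow_add_C hlt _, natDegree_X_pow_sub_X_pow_add_C hlt _,
    hpodd.mul hℓodd.pow, fun b hab => ⟨by rw [map_sub]; ring, ?_⟩⟩
  exact sub_ne_zero.mpr fun h => hab (Units.ext h)
end
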